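/- Let p ≥ 2 and q ≥ 2 be integers with p ∣ q, let m ≥ 2, let π be a permutation of {1, ..., m−1} with π(1) = 1, and let c_1, ..., c_{m−1}, c′ ∈ ℤ_q. For each γ ∈ ℤ_p define b^γ : ℤ_p^{m−1} → ℤ_q by b^γ(x_1, ..., x_{m−1}) = (q/p) Σ_{α=1}^{m−2} x_{π(α)} x_{π(α+1)} + Σ_{α=1}^{m−1} c_α x_α + c′ + γ (q/p) x_{π(1)}, where the digits x_α ∈ {0, ..., p−1} are viewed as elements of ℤ_q and all arithmetic is modulo q. Let ψ(b^γ) be the complex sequence (ζ_q^{b^γ(i⃗)})_{i=0}^{p^{m−1}−1}, where i⃗ ∈ {0, ..., p−1}^{m−1} is the vector of p-ary digits of i and ζ_q = e^{2π√−1/q}. Then {ψ(b^γ) : γ ∈ ℤ_p} is a Golay complementary set of p sequences of length p^{m−1}, i.e., a (q, p, p^{m−1})-GCS. -/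

import Mathlib

/-- Aperiodic autocorrelation function of a length-`L` complex sequence
(indexed `0, ..., L-1`) at integer shift `τ`. -/
noncomputable def rho (L : ℕ) (a : ℕ → ℂ) (τ : ℤ) : ℂ :=
  if 0 ≤ τ ∧ τ < (L : ℤ) then
    ∑ i ∈ Finset.range (L - τ.toNat), a i * (starRingEnd ℂ) (a (i + τ.toNat))
  else if -(L : ℤ) < τ ∧ τ < 0 then
    ∑ i ∈ Finset.range (L - (-τ).toNat), a (i + (-τ).toNat) * (starRingEnd ℂ) (a i)
  else 0

/-!
Write `x, y` for the digit vectors of `i` and `i + t`, `t > 0`. Summing over `γ` first, the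
factor `ζ^{γ (q/p) (x_{π(1)} - y_{π(1)})}` runs through the `p`-th roots of unity unless
`x_{π(1)} = y_{π(1)}`, so only such pairs survive, each contributing `p ζ^{b⁰(i) - b⁰(i+t)}`.
For a surviving pair let `α ≥ 2` be the first index with `x_{π(α)} ≠ y_{π(α)}`. Both numbers
have the same digit at `π(α-1)`; resetting it to any common value `u` keeps the shift `t` and
the index `α`, and changes `b⁰(i) - b⁰(i+t)` by `(q/p) u (x_{π(α)} - y_{π(α)})` plus a constant,
because the path `π` meets `π(α-1)` only through the edges to `π(α-2)` (where the two numbers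
agree) and to `π(α)`. So the surviving pairs fall into classes of size `p` on which the
contributions sum to a vanishing geometric sum.
-/

open Finset ComplexConjugate

namespace Golay

def digit (p n k : ℕ) : ℕ := n / p ^ k % p

def setDigit (p n k u : ℕ) : ℕ := n / p ^ (k + 1) * p ^ (k + 1) + u * p ^ k + n % p ^ k

section Digits

variable {p : ℕ}

lemma digit_lt (hp : 0 < p) (n k : ℕ) : digit p n k < p := Nat.mod_lt _ hp

lemma div_pow_succ_mul_add_digit_mul_add_mod (n k : ℕ) :
    n / p ^ (k + 1) * p ^ (k + 1) + digit p n k * p ^ k + n % p ^ k = n := by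
  have := Nat.div_add_mod' n (p ^ (k + 1))
  rw [Nat.mod_pow_succ] at this
  rw [digit]
  linarith

lemma setDigit_add_digit_mul (n k u : ℕ) :
    setDigit p n k u + digit p n k * p ^ k = n + u * p ^ k := by
  have := div_pow_succ_mul_add_digit_mul_add_mod (p := p) n k
  rw [setDigit]
  omega

lemma setDigit_digit (n k : ℕ) : setDigit p n k (digit p n k) = n :=
  div_pow_succ_mul_add_digit_mul_add_mod n k

lemma setDigit_eq_mul_add (n k u : ℕ) :
    setDigit p n k u = (n / p ^ (k + 1) * p + u) * p ^ k + n % p ^ k := by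
  rw [setDigit]
  ring

lemma setDigit_div_pow (hp : 0 < p) (n k u : ℕ) :
    setDigit p n k u / p ^ k = n / p ^ (k + 1) * p + u := by
  rw [setDigit_eq_mul_add, add_comm, Nat.add_mul_div_right _ _ (by positivity),
    Nat.div_eq_of_lt (Nat.mod_lt _ (by positivity)), zero_add]

lemma setDigit_mod_pow (n k u : ℕ) : setDigit p n k u % p ^ k = n % p ^ k := by
  rw [setDigit_eq_mul_add, add_comm, Nat.add_mul_mod_self_right, Nat.mod_mod]

lemma setDigit_add_of_digit_eq {n t k : ℕ} (u : ℕ) (h : digit p n k = digit p (n + t) k) :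
    setDigit p n k u + t = setDigit p (n + t) k u := by
  have h₁ := setDigit_add_digit_mul (p := p) n k u
  have h₂ := setDigit_add_digit_mul (p := p) (n + t) k u
  rw [← h] at h₂
  omega

lemma setDigit_div_pow_succ (hp : 0 < p) {u : ℕ} (hu : u < p) (n k : ℕ) :
    setDigit p n k u / p ^ (k + 1) = n / p ^ (k + 1) := by
  rw [pow_succ, ← Nat.div_div_eq_div_mul, setDigit_div_pow hp, ← pow_succ, Nat.add_comm,
    Nat.add_mul_div_right _ _ hp, Nat.div_eq_of_lt hu, zero_add]

lemma digit_setDigit_self (hp : 0 < p) {u : ℕ} (hu : u < p) (n k : ℕ) :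
    digit p (setDigit p n k u) k = u := by
  rw [digit, setDigit_div_pow hp, Nat.add_comm, Nat.add_mul_mod_self_right, Nat.mod_eq_of_lt hu]

lemma digit_eq_digit_mod_pow {k l : ℕ} (hl : l < k) (n : ℕ) :
    digit p n l = digit p (n % p ^ k) l := by
  rw [digit, digit, ← Nat.mod_mul_right_div_self, ← Nat.mod_mul_right_div_self, ← pow_succ,
    Nat.mod_mod_of_dvd _ (pow_dvd_pow p hl)]

lemma digit_eq_digit_div_pow {k l : ℕ} (hl : k ≤ l) (n : ℕ) :
    digit p n l = digit p (n / p ^ k) (l - k) := by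
  rw [digit, digit, Nat.div_div_eq_div_mul, ← pow_add, Nat.add_sub_cancel' hl]

lemma digit_setDigit (hp : 0 < p) {u : ℕ} (hu : u < p) (n k : ℕ) :
    digit p (setDigit p n k u) = Function.update (digit p n) k u := by
  funext l
  rcases lt_trichotomy l k with hl | rfl | hl
  · rw [Function.update_of_ne hl.ne, digit_eq_digit_mod_pow hl, setDigit_mod_pow,
      ← digit_eq_digit_mod_pow hl]
  · rw [Function.update_self, digit_setDigit_self hp hu]
  · rw [Function.update_of_ne hl.ne', digit_eq_digit_div_pow hl, setDigit_div_pow_succ hp hu,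
      ← digit_eq_digit_div_pow hl]

lemma setDigit_setDigit (hp : 0 < p) {u : ℕ} (hu : u < p) (n k v : ℕ) :
    setDigit p (setDigit p n k u) k v = setDigit p n k v := by
  have h₁ := setDigit_add_digit_mul (p := p) (setDigit p n k u) k v
  have h₂ := setDigit_add_digit_mul (p := p) n k u
  have h₃ := setDigit_add_digit_mul (p := p) n k v
  rw [digit_setDigit_self hp hu] at h₁
  omega

lemma lt_pow_iff_div_pow_lt (hp : 0 < p) {k M : ℕ} (hk : k ≤ M) (n : ℕ) :
    n < p ^ M ↔ n / p ^ k < p ^ (M - k) := by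
  rw [Nat.div_lt_iff_lt_mul (by positivity), ← pow_add, Nat.sub_add_cancel hk]

lemma setDigit_lt (hp : 0 < p) {u : ℕ} (hu : u < p) {n k M : ℕ} (hk : k < M) (hn : n < p ^ M) :
    setDigit p n k u < p ^ M := by
  rwa [lt_pow_iff_div_pow_lt hp hk, setDigit_div_pow_succ hp hu, ← lt_pow_iff_div_pow_lt hp hk]

lemma eq_of_digit_eq {M n n' : ℕ} (hn : n < p ^ M) (hn' : n' < p ^ M)
    (h : ∀ k < M, digit p n k = digit p n' k) : n = n' := by
  have : finFunctionFinEquiv.symm (⟨n, hn⟩ : Fin (p ^ M)) = finFunctionFinEquiv.symm ⟨n', hn'⟩ :=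
    funext fun k => Fin.ext <| by simpa [finFunctionFinEquiv_symm_apply_val, digit] using h k k.2
  simpa using finFunctionFinEquiv.symm.injective this

lemma digit_setDigit_eq_digit_setDigit_iff (hp : 0 < p) {i j k u : ℕ} (hu : u < p)
    (h : digit p i k = digit p j k) (l : ℕ) :
    digit p (setDigit p i k u) l = digit p (setDigit p j k u) l ↔ digit p i l = digit p j l := by
  rw [digit_setDigit hp hu, digit_setDigit hp hu]
  rcases eq_or_ne l k with rfl | hl
  · simp [h]
  · simp [Function.update_of_ne hl]

/-- Double counting through the involution `(i, u) ↦ (setDigit p i (κ i) u, digit p i (κ i))`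
of `S ×ˢ range p`. -/
lemma nsmul_sum_eq_sum_sum_setDigit {A : Type*} [AddCommMonoid A] (hp : 0 < p) (S : Finset ℕ)
    (κ : ℕ → ℕ) (hS : ∀ i ∈ S, ∀ u < p, setDigit p i (κ i) u ∈ S)
    (hκ : ∀ i ∈ S, ∀ u < p, κ (setDigit p i (κ i) u) = κ i) (φ : ℕ → A) :
    p • ∑ i ∈ S, φ i = ∑ i ∈ S, ∑ u ∈ range p, φ (setDigit p i (κ i) u) := by
  set σ : ℕ × ℕ → ℕ × ℕ := fun x => (setDigit p x.1 (κ x.1) x.2, digit p x.1 (κ x.1))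
  have hσ : ∀ x ∈ S ×ˢ range p, σ x ∈ S ×ˢ range p := by
    rintro ⟨i, u⟩ hx
    rw [mem_product, mem_range] at hx ⊢
    exact ⟨hS i hx.1 u hx.2, digit_lt hp _ _⟩
  have hσσ : ∀ x ∈ S ×ˢ range p, σ (σ x) = x := by
    rintro ⟨i, u⟩ hx
    rw [mem_product, mem_range] at hx
    simp only [σ, hκ i hx.1 u hx.2, setDigit_setDigit hp hx.2, setDigit_digit,
      digit_setDigit_self hp hx.2]
  calc p • ∑ i ∈ S, φ i = ∑ x ∈ S ×ˢ range p, φ x.1 := by simp [sum_product, smul_sum]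
    _ = ∑ x ∈ S ×ˢ range p, φ (σ x).1 :=
      sum_nbij' σ σ hσ hσ hσσ hσσ fun x hx => by rw [hσσ x hx]
    _ = ∑ i ∈ S, ∑ u ∈ range p, φ (setDigit p i (κ i) u) := sum_product ..

end Digits

section PathQuad

variable {R : Type*} [CommRing R]

def pathQuad (f : ℕ → ℕ) (N : ℕ) (x : ℕ → R) : R :=
  ∑ α ∈ Icc 1 N, x (f α) * x (f (α + 1))

lemma pathQuad_update_sub {f : ℕ → ℕ} {N s : ℕ} (hf : Set.InjOn f (Set.Icc 1 (N + 1)))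
    (hs : s ∈ Icc 1 N) {x y : ℕ → R} (hxy : ∀ α ∈ Icc 1 s, x (f α) = y (f α)) (u : R) :
    pathQuad f N (Function.update x (f s) u) - pathQuad f N (Function.update y (f s) u) =
      pathQuad f N x - pathQuad f N y + (u - x (f s)) * (x (f (s + 1)) - y (f (s + 1))) := by
  rw [mem_Icc] at hs
  have hne : ∀ α, 1 ≤ α → α ≤ N + 1 → α ≠ s → f α ≠ f s := fun α h₁ h₂ hα h =>
    hα (hf ⟨h₁, h₂⟩ ⟨hs.1, by omega⟩ h)
  have hterm : ∀ α ∈ Icc 1 N,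
      Function.update x (f s) u (f α) * Function.update x (f s) u (f (α + 1)) -
          Function.update y (f s) u (f α) * Function.update y (f s) u (f (α + 1)) =
        (x (f α) * x (f (α + 1)) - y (f α) * y (f (α + 1))) +
          if α = s then (u - x (f s)) * (x (f (s + 1)) - y (f (s + 1))) else 0 := by
    intro α hα
    rw [mem_Icc] at hα
    by_cases has : α = s
    · subst has
      rw [if_pos rfl, Function.update_self, Function.update_self,
        Function.update_of_ne (hne _ (by omega) (by omega) (by omega)),
        Function.update_of_ne (hne _ (by omega) (by omega) (by omega)),
        hxy α (mem_Icc.2 ⟨hα.1, le_rfl⟩)]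
      ring
    rw [if_neg has, add_zero, Function.update_of_ne (hne α hα.1 (by omega) has),
      Function.update_of_ne (hne α hα.1 (by omega) has)]
    by_cases has' : α + 1 = s
    · subst has'
      rw [Function.update_self, Function.update_self, hxy α (mem_Icc.2 ⟨hα.1, by omega⟩),
        hxy (α + 1) (mem_Icc.2 ⟨by omega, le_rfl⟩)]
      ring
    · rw [Function.update_of_ne (hne _ (by omega) (by omega) has'),
        Function.update_of_ne (hne _ (by omega) (by omega) has')]
  simp only [pathQuad]
  rw [← sum_sub_distrib, ← sum_sub_distrib, sum_congr rfl hterm, sum_add_distrib,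
    sum_ite_eq' , if_pos (mem_Icc.2 hs)]

lemma sum_mul_update_sub_sum_mul_update {ι : Type*} (S : Finset ι) (c : ι → R) (g : ι → ℕ)
    {x y : ℕ → R} {k : ℕ} (h : x k = y k) (u : R) :
    ∑ α ∈ S, c α * Function.update x k u (g α) - ∑ α ∈ S, c α * Function.update y k u (g α) =
      ∑ α ∈ S, c α * x (g α) - ∑ α ∈ S, c α * y (g α) := by
  simp_rw [← sum_sub_distrib, ← mul_sub]
  refine sum_congr rfl fun α _ => ?_
  rcases eq_or_ne (g α) k with hα | hα
  · simp [hα, h]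
  · simp [Function.update_of_ne hα]

end PathQuad

section FirstDiff

variable {p : ℕ} {f : ℕ → ℕ} {M i j : ℕ}

noncomputable def firstDiff (p : ℕ) (f : ℕ → ℕ) (i j : ℕ) : ℕ :=
  sInf {α | 0 < α ∧ digit p i (f α) ≠ digit p j (f α)}

noncomputable def pivot (p : ℕ) (f : ℕ → ℕ) (i j : ℕ) : ℕ := f (firstDiff p f i j - 1)

lemma exists_digit_ne (hf : Set.SurjOn f (Set.Icc 1 M) (Set.Iio M)) (hi : i < p ^ M)
    (hj : j < p ^ M) (hij : i ≠ j) : ∃ α ∈ Set.Icc 1 M, digit p i (f α) ≠ digit p j (f α) := by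
  by_contra! h
  refine hij (eq_of_digit_eq hi hj fun k hk => ?_)
  obtain ⟨α, hα, rfl⟩ := hf (Set.mem_Iio.2 hk)
  exact h α hα

lemma firstDiff_mem_Icc_and_digit_ne (hf : Set.SurjOn f (Set.Icc 1 M) (Set.Iio M))
    (hf1 : f 1 = 0) (hi : i < p ^ M) (hj : j < p ^ M) (hij : i ≠ j)
    (h0 : digit p i 0 = digit p j 0) :
    firstDiff p f i j ∈ Set.Icc 2 M ∧
      digit p i (f (firstDiff p f i j)) ≠ digit p j (f (firstDiff p f i j)) := by
  obtain ⟨α, hα, hne⟩ := exists_digit_ne hf hi hj hij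
  obtain ⟨hpos, hdiff⟩ : firstDiff p f i j ∈ {α | 0 < α ∧ digit p i (f α) ≠ digit p j (f α)} :=
    Nat.sInf_mem ⟨α, hα.1, hne⟩
  have hle : firstDiff p f i j ≤ α := Nat.sInf_le ⟨hα.1, hne⟩
  have h1 : firstDiff p f i j ≠ 1 := fun h => hdiff (by rwa [h, hf1])
  exact ⟨⟨by omega, hle.trans hα.2⟩, hdiff⟩

lemma digit_eq_of_lt_firstDiff {α : ℕ} (hα : 0 < α) (h : α < firstDiff p f i j) :
    digit p i (f α) = digit p j (f α) := by
  by_contra hne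
  exact Nat.notMem_of_lt_sInf h ⟨hα, hne⟩

lemma firstDiff_setDigit (hp : 0 < p) {k u : ℕ} (hu : u < p) (h : digit p i k = digit p j k) :
    firstDiff p f (setDigit p i k u) (setDigit p j k u) = firstDiff p f i j := by
  simp only [firstDiff, ne_eq, digit_setDigit_eq_digit_setDigit_iff hp hu h]

lemma pivot_setDigit (hp : 0 < p) {k u : ℕ} (hu : u < p) (h : digit p i k = digit p j k) :
    pivot p f (setDigit p i k u) (setDigit p j k u) = pivot p f i j := by
  rw [pivot, firstDiff_setDigit hp hu h, pivot]

lemma pivot_lt_and_digit_eq (hf : Set.BijOn f (Set.Icc 1 M) (Set.Iio M)) (hf1 : f 1 = 0)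
    (hi : i < p ^ M) (hj : j < p ^ M) (hij : i ≠ j) (h0 : digit p i 0 = digit p j 0) :
    pivot p f i j < M ∧ digit p i (pivot p f i j) = digit p j (pivot p f i j) := by
  obtain ⟨hA₁, hA₂⟩ := (firstDiff_mem_Icc_and_digit_ne hf.surjOn hf1 hi hj hij h0).1
  exact ⟨hf.mapsTo ⟨by omega, by omega⟩,
    digit_eq_of_lt_firstDiff (f := f) (α := firstDiff p f i j - 1) (by omega) (by omega)⟩

end FirstDiff

section GolayFun

variable {p q M : ℕ} {f : ℕ → ℕ} {c : ℕ → ZMod q} {c' : ZMod q}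

def digitVec (p q n : ℕ) : ℕ → ZMod q := fun k => (digit p n k : ZMod q)

lemma digitVec_setDigit (hp : 0 < p) {u : ℕ} (hu : u < p) (n k : ℕ) :
    digitVec p q (setDigit p n k u) = Function.update (digitVec p q n) k (u : ZMod q) := by
  change Nat.cast ∘ digit p _ = _
  rw [digit_setDigit hp hu, Function.comp_update]
  rfl

/-- The function `b^γ` of the theorem with `M = m - 1`, the `p`-ary digits indexed from `0`
(`x_α = digitVec p q n (α - 1)`) and the path read in these indices (`f α = π α - 1`). -/
def golayFun (p q M : ℕ) (f : ℕ → ℕ) (c : ℕ → ZMod q) (c' : ZMod q) (γ : ZMod p) (n : ℕ) :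
    ZMod q :=
  (q / p : ℕ) * pathQuad f (M - 1) (digitVec p q n) +
    ∑ α ∈ Icc 1 M, c α * digitVec p q n (α - 1) + c' + γ.val * (q / p : ℕ) * digitVec p q n 0

lemma golayFun_sub_golayFun (γ : ZMod p) (i j : ℕ) :
    golayFun p q M f c c' γ i - golayFun p q M f c c' γ j =
      golayFun p q M f c c' 0 i - golayFun p q M f c c' 0 j +
        γ.val • ((q / p : ℕ) * (digitVec p q i 0 - digitVec p q j 0)) := by
  simp only [golayFun, ZMod.val_zero, Nat.cast_zero, nsmul_eq_mul]
  ring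

lemma golayFun_zero_setDigit_sub (hp : 0 < p) {u : ℕ} (hu : u < p)
    (hf : Set.InjOn f (Set.Icc 1 M)) {s : ℕ} (hs : s ∈ Icc 1 (M - 1)) {i j : ℕ}
    (hij : ∀ α ∈ Icc 1 s, digit p i (f α) = digit p j (f α)) :
    golayFun p q M f c c' 0 (setDigit p i (f s) u) -
        golayFun p q M f c c' 0 (setDigit p j (f s) u) =
      golayFun p q M f c c' 0 i - golayFun p q M f c c' 0 j +
        ((u : ZMod q) - digitVec p q i (f s)) *
          ((q / p : ℕ) * (digitVec p q i (f (s + 1)) - digitVec p q j (f (s + 1)))) := by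
  have hM : M - 1 + 1 = M := by rw [mem_Icc] at hs; omega
  have hxy : ∀ α ∈ Icc 1 s, digitVec p q i (f α) = digitVec p q j (f α) :=
    fun α hα => congrArg Nat.cast (hij α hα)
  have hQ := pathQuad_update_sub (hM ▸ hf) hs hxy (u : ZMod q)
  have hL := sum_mul_update_sub_sum_mul_update (Icc 1 M) c (· - 1)
    (hxy s (right_mem_Icc.2 (mem_Icc.1 hs).1)) (u : ZMod q)
  simp only [golayFun, digitVec_setDigit hp hu, ZMod.val_zero, Nat.cast_zero, zero_mul, add_zero]
  linear_combination ((q / p : ℕ) : ZMod q) * hQ + hL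

end GolayFun

section Characters

open ZMod

variable {p q : ℕ}

lemma sum_zmod_val_eq_sum_range {A : Type*} [AddCommMonoid A] [NeZero p] (g : ℕ → A) :
    ∑ γ : ZMod p, g γ.val = ∑ u ∈ range p, g u := by
  obtain ⟨n, rfl⟩ := Nat.exists_eq_succ_of_ne_zero (NeZero.ne p)
  exact Fin.sum_univ_eq_sum_range g (n + 1)

lemma stdAddChar_mul_conj [NeZero q] (a b : ZMod q) :
    stdAddChar a * conj (stdAddChar b) = stdAddChar (a - b) := by
  rw [sub_eq_add_neg, AddChar.map_add_eq_mul, AddChar.map_neg_eq_conj]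

lemma geom_sum_stdAddChar_eq_zero [NeZero q] (hpq : p ∣ q) {a b : ℕ} (ha : a < p) (hb : b < p)
    (hab : a ≠ b) :
    ∑ u ∈ range p, stdAddChar (((q / p : ℕ) : ZMod q) * ((a : ZMod q) - (b : ZMod q))) ^ u = 0 := by
  have hqp : 0 < q / p := Nat.div_pos (Nat.le_of_dvd (NeZero.pos q) hpq) (by omega)
  have hlt : ∀ x < p, q / p * x < q := fun x hx =>
    (Nat.mul_lt_mul_left hqp).2 hx |>.trans_eq (Nat.div_mul_cancel hpq)
  have hw : stdAddChar (((q / p : ℕ) : ZMod q) * ((a : ZMod q) - (b : ZMod q))) ≠ 1 := by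
    rw [← AddChar.map_zero_eq_one (stdAddChar (N := q)), injective_stdAddChar.ne_iff, mul_sub,
      sub_ne_zero, ← Nat.cast_mul, ← Nat.cast_mul, Ne, ZMod.natCast_eq_natCast_iff',
      Nat.mod_eq_of_lt (hlt a ha), Nat.mod_eq_of_lt (hlt b hb)]
    exact fun h => hab (Nat.eq_of_mul_eq_mul_left hqp h)
  have hw1 : stdAddChar (((q / p : ℕ) : ZMod q) * ((a : ZMod q) - (b : ZMod q))) ^ p = 1 := by
    rw [← AddChar.map_nsmul_eq_pow, nsmul_eq_mul, ← mul_assoc, ← Nat.cast_mul,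
      Nat.mul_div_cancel' hpq, ZMod.natCast_self, zero_mul, AddChar.map_zero_eq_one]
  rw [geom_sum_eq hw, hw1, sub_self, zero_div]

end Characters

section Autocorrelation

open ZMod

variable {p q M : ℕ} {f : ℕ → ℕ} {c : ℕ → ZMod q} {c' : ZMod q}

lemma sum_stdAddChar_golayFun_mul_conj [NeZero p] [NeZero q] (hpq : p ∣ q) (i j : ℕ) :
    ∑ γ : ZMod p, stdAddChar (golayFun p q M f c c' γ i) *
        conj (stdAddChar (golayFun p q M f c c' γ j)) =
      if digit p i 0 = digit p j 0 then
        p * stdAddChar (golayFun p q M f c c' 0 i - golayFun p q M f c c' 0 j) else 0 := by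
  set w := stdAddChar (((q / p : ℕ) : ZMod q) * (digitVec p q i 0 - digitVec p q j 0))
  have hterm : ∀ γ : ZMod p, stdAddChar (golayFun p q M f c c' γ i) *
      conj (stdAddChar (golayFun p q M f c c' γ j)) =
        stdAddChar (golayFun p q M f c c' 0 i - golayFun p q M f c c' 0 j) * w ^ γ.val := by
    intro γ
    rw [stdAddChar_mul_conj, golayFun_sub_golayFun, AddChar.map_add_eq_mul,
      AddChar.map_nsmul_eq_pow]
  rw [sum_congr rfl fun γ _ => hterm γ, ← mul_sum, sum_zmod_val_eq_sum_range (w ^ ·)]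
  split_ifs with h
  · simp [w, digitVec, h, mul_comm]
  · exact mul_eq_zero_of_right _ <| geom_sum_stdAddChar_eq_zero hpq
      (digit_lt (NeZero.pos p) _ _) (digit_lt (NeZero.pos p) _ _) h

lemma sum_stdAddChar_golayFun_setDigit_pivot_eq_zero [NeZero q] (hp : 0 < p) (hpq : p ∣ q)
    (hf : Set.BijOn f (Set.Icc 1 M) (Set.Iio M)) (hf1 : f 1 = 0) {t i : ℕ} (ht : 0 < t)
    (hi : i + t < p ^ M) (h0 : digit p i 0 = digit p (i + t) 0) :
    ∑ u ∈ range p, stdAddChar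
      (golayFun p q M f c c' 0 (setDigit p i (pivot p f i (i + t)) u) -
        golayFun p q M f c c' 0 (setDigit p i (pivot p f i (i + t)) u + t)) = 0 := by
  obtain ⟨⟨hA₁, hA₂⟩, hne⟩ :=
    firstDiff_mem_Icc_and_digit_ne hf.surjOn hf1 (by omega : i < p ^ M) hi (by omega) h0
  set A := firstDiff p f i (i + t)
  have hs : A - 1 ∈ Icc 1 (M - 1) := mem_Icc.2 ⟨by omega, by omega⟩
  have hagree : ∀ α ∈ Icc 1 (A - 1), digit p i (f α) = digit p (i + t) (f α) := fun α hα =>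
    digit_eq_of_lt_firstDiff (mem_Icc.1 hα).1 (by rw [mem_Icc] at hα; omega)
  have hk := hagree (A - 1) (right_mem_Icc.2 (mem_Icc.1 hs).1)
  set z : ZMod q := ((q / p : ℕ) : ZMod q) *
    ((digit p i (f A) : ZMod q) - (digit p (i + t) (f A) : ZMod q))
  have hterm : ∀ u ∈ range p, stdAddChar
      (golayFun p q M f c c' 0 (setDigit p i (pivot p f i (i + t)) u) -
        golayFun p q M f c c' 0 (setDigit p i (pivot p f i (i + t)) u + t)) =
      stdAddChar (golayFun p q M f c c' 0 i - golayFun p q M f c c' 0 (i + t) -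
        digitVec p q i (f (A - 1)) * z) * stdAddChar z ^ u := by
    intro u hu
    rw [pivot, setDigit_add_of_digit_eq u hk,
      golayFun_zero_setDigit_sub hp (mem_range.1 hu) hf.injOn hs hagree,
      Nat.sub_add_cancel (by omega : 1 ≤ A), ← AddChar.map_nsmul_eq_pow,
      ← AddChar.map_add_eq_mul, nsmul_eq_mul]
    congr 1
    simp only [z, digitVec]
    ring
  rw [sum_congr rfl hterm, ← mul_sum,
    geom_sum_stdAddChar_eq_zero hpq (digit_lt hp _ _) (digit_lt hp _ _) hne, mul_zero]

theorem sum_sum_stdAddChar_mul_conj_eq_zero [NeZero p] [NeZero q] (hpq : p ∣ q)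
    (hf : Set.BijOn f (Set.Icc 1 M) (Set.Iio M)) (hf1 : f 1 = 0) {t : ℕ} (ht : 0 < t) :
    ∑ γ : ZMod p, ∑ i ∈ range (p ^ M - t), stdAddChar (golayFun p q M f c c' γ i) *
      conj (stdAddChar (golayFun p q M f c c' γ (i + t))) = 0 := by
  have hp := NeZero.pos p
  set T := (range (p ^ M - t)).filter fun i => digit p i 0 = digit p (i + t) 0
  have hT : ∀ i, i ∈ T ↔ i + t < p ^ M ∧ digit p i 0 = digit p (i + t) 0 := by
    intro i
    rw [mem_filter, mem_range]
    omega
  have horbit : ∀ i ∈ T, ∀ u < p, setDigit p i (pivot p f i (i + t)) u ∈ T ∧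
      pivot p f (setDigit p i (pivot p f i (i + t)) u)
        (setDigit p i (pivot p f i (i + t)) u + t) = pivot p f i (i + t) := by
    intro i hi u hu
    rw [hT] at hi ⊢
    obtain ⟨hk, hdk⟩ := pivot_lt_and_digit_eq hf hf1 (by omega) hi.1 (by omega) hi.2
    rw [setDigit_add_of_digit_eq u hdk]
    exact ⟨⟨setDigit_lt hp hu hk hi.1, (digit_setDigit_eq_digit_setDigit_iff hp hu hdk 0).2 hi.2⟩,
      pivot_setDigit hp hu hdk⟩
  have hT0 : ∑ i ∈ T, stdAddChar (golayFun p q M f c c' 0 i - golayFun p q M f c c' 0 (i + t)) =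
      0 := by
    have h := nsmul_sum_eq_sum_sum_setDigit hp T (fun i => pivot p f i (i + t))
      (fun i hi u hu => (horbit i hi u hu).1) (fun i hi u hu => (horbit i hi u hu).2)
      fun n => stdAddChar (golayFun p q M f c c' 0 n - golayFun p q M f c c' 0 (n + t))
    rw [sum_eq_zero fun i hi => sum_stdAddChar_golayFun_setDigit_pivot_eq_zero hp hpq hf hf1 ht
      ((hT i).1 hi).1 ((hT i).1 hi).2] at h
    exact (smul_eq_zero.1 h).resolve_left (NeZero.ne p)
  rw [sum_comm]
  simp_rw [sum_stdAddChar_golayFun_mul_conj hpq]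
  rw [← sum_filter, ← mul_sum, hT0, mul_zero]

end Autocorrelation

lemma bijOn_sub_one_comp {M : ℕ} {π : ℕ → ℕ} (hπ : Function.Injective π)
    (hmaps : ∀ α ∈ Icc 1 M, π α ∈ Icc 1 M) :
    Set.BijOn (fun α => π α - 1) (Set.Icc 1 M) (Set.Iio M) := by
  have hπ' : Set.BijOn π (Set.Icc 1 M) (Set.Icc 1 M) :=
    ((Set.finite_Icc 1 M).injOn_iff_bijOn_of_mapsTo
      fun α hα => by simpa using hmaps α (by simpa using hα)).1 hπ.injOn
  have hpred : Set.BijOn (· - 1) (Set.Icc 1 M) (Set.Iio M) :=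
    ⟨fun x hx => by simp at *; omega, fun x hx y hy h => by simp at *; omega,
      fun y hy => ⟨y + 1, by simp at *; omega, by simp⟩⟩
  exact hpred.comp hπ'

end Golay

open Finset ComplexConjugate

lemma rho_natCast (L : ℕ) (a : ℕ → ℂ) (t : ℕ) :
    rho L a t = ∑ i ∈ range (L - t), a i * conj (a (i + t)) := by
  unfold rho
  split_ifs with h₁ h₂
  · simp
  · omega
  · rw [Nat.sub_eq_zero_of_le (by omega), sum_range_zero]

lemma rho_neg_natCast (L : ℕ) (a : ℕ → ℂ) {t : ℕ} (ht : 0 < t) :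
    rho L a (-t) = conj (rho L a t) := by
  rw [rho_natCast, map_sum]
  unfold rho
  split_ifs with h₁ h₂
  · omega
  · simp [mul_comm]
  · rw [Nat.sub_eq_zero_of_le (by omega), sum_range_zero]

theorem gcs_first_order_general (p q m : ℕ) [NeZero p]
    (hq : 2 ≤ q) (hpq : p ∣ q)
    (π : Equiv.Perm ℕ)
    (hπ : ∀ α ∈ Finset.Icc 1 (m - 1), π α ∈ Finset.Icc 1 (m - 1))
    (hπ1 : π 1 = 1)
    (c : ℕ → ZMod q) (c' : ZMod q)
    (dig : ℕ → ℕ → ℕ) (hdig : ∀ i α, dig i α = i / p ^ (α - 1) % p)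
    (b : ZMod p → ℕ → ZMod q)
    (hb : ∀ γ i, b γ i =
      ((q / p : ℕ) : ZMod q) *
          ∑ α ∈ Finset.Icc 1 (m - 2),
            ((dig i (π α) : ZMod q) * (dig i (π (α + 1)) : ZMod q)) +
        ∑ α ∈ Finset.Icc 1 (m - 1), c α * (dig i α : ZMod q) + c' +
        (γ.val : ZMod q) * ((q / p : ℕ) : ZMod q) * (dig i (π 1) : ZMod q))
    (ψ : ZMod p → ℕ → ℂ)
    (hψ : ∀ γ i, ψ γ i =
      Complex.exp (2 * Real.pi * Complex.I * ((b γ i).val : ℂ) / (q : ℂ))) :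
    ∀ τ : ℤ, τ ≠ 0 → ∑ γ : ZMod p, rho (p ^ (m - 1)) (ψ γ) τ = 0 := by
  have : NeZero q := ⟨by omega⟩
  set f : ℕ → ℕ := fun α => π α - 1
  have hf : Set.BijOn f (Set.Icc 1 (m - 1)) (Set.Iio (m - 1)) :=
    Golay.bijOn_sub_one_comp π.injective hπ
  have hf1 : f 1 = 0 := by simp [f, hπ1]
  have hψ' : ∀ γ, ψ γ = fun i => ZMod.stdAddChar (Golay.golayFun p q (m - 1) f c c' γ i) := by
    intro γ
    funext i
    rw [hψ, ZMod.stdAddChar_apply, ZMod.toCircle_apply, hb]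
    simp only [Golay.golayFun, Golay.pathQuad, Golay.digitVec, Golay.digit, hdig, hπ1, f,
      Nat.sub_sub]
  have hpos : ∀ t : ℕ, 0 < t → ∑ γ : ZMod p, rho (p ^ (m - 1)) (ψ γ) t = 0 := fun t ht => by
    simp_rw [rho_natCast, hψ']
    exact Golay.sum_sum_stdAddChar_mul_conj_eq_zero hpq hf hf1 ht
  intro τ hτ
  obtain ⟨t, rfl | rfl⟩ := Int.eq_nat_or_neg τ
  · exact hpos t (by omega)
  · simp_rw [rho_neg_natCast _ _ (by omega : 0 < t)]
    rw [← map_sum, hpos t (by omega), map_zero]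

/-- Let `p, q ≥ 2` with `p ∣ q`, `m ≥ 2`, `π` a permutation of `{1, ..., m-1}` with
`π(1) = 1`, and `c_1, ..., c_{m-1}, c' ∈ ℤ_q`. For `γ ∈ ℤ_p` define
`b^γ(x) = (q/p) Σ_{α=1}^{m-2} x_{π(α)} x_{π(α+1)} + Σ_{α=1}^{m-1} c_α x_α + c' + γ(q/p)x_{π(1)}`.
Then the complex sequences `ψ(b^γ) = (ζ_q^{b^γ(i⃗)})_{i=0}^{p^{m-1}-1}`, `γ ∈ ℤ_p`, form a
`(q, p, p^{m-1})`-Golay complementary set. Here `dig i α` is the `α`-th (1-based) `p`-ary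
digit of `i`. -/
theorem gcs_first_order (p q m : ℕ) [NeZero p]
    (hp : 2 ≤ p) (hq : 2 ≤ q) (hpq : p ∣ q) (hm : 2 ≤ m)
    (π : Equiv.Perm ℕ)
    (hπ : ∀ α ∈ Finset.Icc 1 (m - 1), π α ∈ Finset.Icc 1 (m - 1))
    (hπ1 : π 1 = 1)
    (c : ℕ → ZMod q) (c' : ZMod q)
    (dig : ℕ → ℕ → ℕ) (hdig : ∀ i α, dig i α = i / p ^ (α - 1) % p)
    (b : ZMod p → ℕ → ZMod q)
    (hb : ∀ γ i, b γ i =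
      ((q / p : ℕ) : ZMod q) *
          ∑ α ∈ Finset.Icc 1 (m - 2),
            ((dig i (π α) : ZMod q) * (dig i (π (α + 1)) : ZMod q)) +
        ∑ α ∈ Finset.Icc 1 (m - 1), c α * (dig i α : ZMod q) + c' +
        (γ.val : ZMod q) * ((q / p : ℕ) : ZMod q) * (dig i (π 1) : ZMod q))
    (ψ : ZMod p → ℕ → ℂ)
    (hψ : ∀ γ i, ψ γ i =
      Complex.exp (2 * Real.pi * Complex.I * ((b γ i).val : ℂ) / (q : ℂ))) :
    ∀ τ : ℤ, τ ≠ 0 → ∑ γ : ZMod p, rho (p ^ (m - 1)) (ψ γ) τ = 0 :=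
  gcs_first_order_general p q m hq hpq π hπ hπ1 c c' dig hdig b hb ψ hψ
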